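/- arXiv:2502.20628 — 4 statements merged into one kernel-verified Lean document; each statement's English description precedes it below -/
import Mathlib

section
/- Let G be a finite connected locally connected graph and let z, a, b be three distinct vertices such that line(z,a) = line(z,b). Then z lies between a and b, i.e., d(a,b) = d(a,z) + d(z,b). -/
/-!
Since `a ∈ line(z,b)`, one of `a`, `b`, `z` lies between the other two, and by symmetry it
suffices to rule out that `a` lies between `z` and `b`. In that case a neighbour `c` of `a`
with `d(c,b) = d(a,b)` is either as far from `z` as `a` (then `c` lies on a geodesic from `z`
to `b`, but cannot lie in `line(z,a)`) or one step farther (then `c ∈ line(z,a)` but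
`c ∉ line(z,b)`), so no such neighbour exists. Yet `a` has a neighbour closer to `b` and,
towards `z`, one farther from `b`; a walk between them in the connected neighbourhood of `a`
changes the distance to `b` by at most one per step, so it must pass through `d(a,b)`.
-/

open SimpleGraph

/-- The line defined by two vertices `a` and `b` of a graph: `{a, b}` together with all
vertices `c` lying on a shortest path through `a`, `b` and `c` (in some order). -/
def SimpleGraph.line {V : Type*} (G : SimpleGraph V) (a b : V) : Set V :=
  {a, b} ∪ {c | G.dist a b = G.dist a c + G.dist c b ∨
                G.dist a c = G.dist a b + G.dist b c ∨
                G.dist b c = G.dist b a + G.dist a c}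

/-- The set of all lines of a graph. -/
def SimpleGraph.lineSet {V : Type*} (G : SimpleGraph V) : Set (Set V) :=
  {s | ∃ a b : V, a ≠ b ∧ s = G.line a b}

/-- A graph is locally connected if the subgraph induced on each neighborhood is connected. -/
def SimpleGraph.LocallyConnected {V : Type*} (G : SimpleGraph V) : Prop :=
  ∀ v : V, (G.induce (G.neighborSet v)).Connected

namespace SimpleGraph

variable {V : Type*} {G : SimpleGraph V}

lemma Reachable.exists_adj_dist_add_one_eq {u v : V} (hr : G.Reachable u v) (hne : u ≠ v) :
    ∃ w, G.Adj u w ∧ G.dist w v + 1 = G.dist u v := by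
  obtain ⟨p, hp⟩ := hr.exists_walk_length_eq_dist
  cases p with
  | nil => exact absurd rfl hne
  | @cons _ w _ hadj q =>
    refine ⟨w, hadj, le_antisymm ?_ ?_⟩
    · rw [← hp, Walk.length_cons]
      exact Nat.add_le_add_right (dist_le q) 1
    · calc G.dist u v ≤ G.dist u w + G.dist w v := hadj.reachable.dist_triangle_left v
        _ = G.dist w v + 1 := by rw [dist_eq_one_iff_adj.2 hadj, add_comm]

lemma Walk.exists_mem_support_dist_eq {u v : V} (p : G.Walk u v) (b : V) {k : ℕ}
    (hu : G.dist b u ≤ k) (hv : k ≤ G.dist b v) : ∃ c ∈ p.support, G.dist b c = k := by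
  induction p with
  | nil => exact ⟨_, List.mem_singleton_self _, le_antisymm hu hv⟩
  | @cons u w _ hadj q ih =>
    by_cases huk : G.dist b u = k
    · exact ⟨u, Walk.start_mem_support _, huk⟩
    have hw : G.dist b w ≤ k := by
      rcases hadj.diff_dist_adj (u := b) with h | h | h <;> omega
    obtain ⟨c, hc, hck⟩ := ih hw hv
    exact ⟨c, List.mem_cons_of_mem _ hc, hck⟩

lemma LocallyConnected.exists_adj_dist_eq (hlc : G.LocallyConnected) {a u v : V}
    (hu : G.Adj a u) (hv : G.Adj a v) (b : V) {k : ℕ}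
    (hvk : G.dist b v ≤ k) (hku : k ≤ G.dist b u) : ∃ c, G.Adj a c ∧ G.dist b c = k := by
  obtain ⟨w⟩ := (hlc a).preconnected ⟨v, hv⟩ ⟨u, hu⟩
  obtain ⟨c, hc, hck⟩ := (w.map (Embedding.induce _).toHom).exists_mem_support_dist_eq b hvk hku
  rw [Walk.support_map, List.mem_map] at hc
  obtain ⟨c, -, rfl⟩ := hc
  exact ⟨c, c.2, hck⟩

/-- The endpoints need not be listed separately: they satisfy the first alternative. -/
lemma mem_line_iff {a b c : V} :
    c ∈ G.line a b ↔ G.dist a b = G.dist a c + G.dist c b ∨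
      G.dist a c = G.dist a b + G.dist b c ∨ G.dist b c = G.dist b a + G.dist a c := by
  simp only [line, Set.mem_union, Set.mem_insert_iff, Set.mem_singleton_iff, Set.mem_ofPred_eq]
  constructor
  · rintro ((rfl | rfl) | h) <;> simp_all
  · exact Or.inr

lemma right_mem_line (a b : V) : b ∈ G.line a b :=
  Or.inl (Or.inr rfl)

lemma dist_ne_dist_add_dist_of_line_eq (hG : G.Connected) (hlc : G.LocallyConnected)
    {z a b : V} (hza : z ≠ a) (hab : a ≠ b) (h : G.line z a = G.line z b) :
    G.dist z b ≠ G.dist z a + G.dist a b := by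
  intro hk
  obtain ⟨u, hau, hu⟩ := (hG a z).exists_adj_dist_add_one_eq hza.symm
  obtain ⟨v, hav, hv⟩ := (hG a b).exists_adj_dist_add_one_eq hab
  have hzu : G.dist z b ≤ G.dist z u + G.dist u b := hG.dist_triangle
  have := hG.pos_dist_of_ne hza
  have : G.dist a z = G.dist z a := dist_comm
  have : G.dist z u = G.dist u z := dist_comm
  have : G.dist b u = G.dist u b := dist_comm
  have : G.dist b v = G.dist v b := dist_comm
  have : G.dist b a = G.dist a b := dist_comm
  have : G.dist b z = G.dist z b := dist_comm
  have hnear : G.dist b v ≤ G.dist b a := by omega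
  have hfar : G.dist b a ≤ G.dist b u := by omega
  obtain ⟨c, hac, hc⟩ := hlc.exists_adj_dist_eq hau hav b hnear hfar
  have hzc : G.dist z b ≤ G.dist z c + G.dist c b := hG.dist_triangle
  have : G.dist a c = 1 := dist_eq_one_iff_adj.2 hac
  have : G.dist c a = 1 := dist_eq_one_iff_adj.2 hac.symm
  have : G.dist b c = G.dist c b := dist_comm
  rcases hac.diff_dist_adj (u := z) with hc' | hc' | hc'
  · have hmem : c ∈ G.line z a := h ▸ mem_line_iff.2 (Or.inl (by omega))
    rcases mem_line_iff.1 hmem with h' | h' | h' <;> omega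
  · have hmem : c ∈ G.line z b := h ▸ mem_line_iff.2 (Or.inr (Or.inl (by omega)))
    rcases mem_line_iff.1 hmem with h' | h' | h' <;> omega
  · omega

end SimpleGraph

theorem z_in_the_middle_general {V : Type*} (G : SimpleGraph V)
    (hG : G.Connected) (hlc : G.LocallyConnected)
    {z a b : V} (hza : z ≠ a) (hzb : z ≠ b) (hab : a ≠ b)
    (h : G.line z a = G.line z b) :
    G.dist a b = G.dist a z + G.dist z b := by
  have := G.dist_ne_dist_add_dist_of_line_eq hG hlc hza hab h
  have := G.dist_ne_dist_add_dist_of_line_eq hG hlc hzb hab.symm h.symm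
  have : G.dist b a = G.dist a b := dist_comm
  have : G.dist b z = G.dist z b := dist_comm
  have : G.dist a z = G.dist z a := dist_comm
  rcases G.mem_line_iff.1 (h ▸ G.right_mem_line z a) with h' | h' | h' <;> omega

theorem z_in_the_middle {V : Type*} [Fintype V] (G : SimpleGraph V)
    (hG : G.Connected) (hlc : G.LocallyConnected)
    {z a b : V} (hza : z ≠ a) (hzb : z ≠ b) (hab : a ≠ b)
    (h : G.line z a = G.line z b) :
    G.dist a b = G.dist a z + G.dist z b :=
  z_in_the_middle_general G hG hlc hza hzb hab h
end

section
/- Every finite 2-connected chordal graph is locally connected; that is, if G is a finite connected graph on at least 3 vertices such that deleting any single vertex leaves a connected graph, and G contains no induced cycle of length at least 4, then for every vertex v the subgraph induced on N(v) is connected. -/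
/-!
Let `a, b` be neighbours of `v`. Since `G - v` is connected, some walk from `a` to `b` avoids `v`;
induct on its length. If a shorter walk exists on the same vertices, use it. Otherwise the walk
is an induced path. If one of its inner vertices is adjacent to `v`, split the walk there.
If none is, then the path is just the edge `ab` or the vertex `a = b`: a longer path
together with `v` would form an induced cycle of length at least 4.
-/

open SimpleGraph

namespace SimpleGraph

variable {V : Type*} {G : SimpleGraph V}

lemma cycleGraph_adj_zero_succ {n : ℕ} (j : Fin (n + 1)) :
    (cycleGraph (n + 2)).Adj 0 j.succ ↔ j.val = 0 ∨ j.val = n := by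
  have := j.isLt
  rw [cycleGraph_adj', Fin.sub_val_of_le (Fin.zero_le _), Fin.coe_sub_iff_lt.mpr (Fin.succ_pos j)]
  simp only [Fin.val_succ, Fin.val_zero]
  omega

lemma cycleGraph_adj_succ_succ {n : ℕ} (i j : Fin (n + 1)) :
    (cycleGraph (n + 2)).Adj i.succ j.succ ↔ (pathGraph (n + 1)).Adj i j := by
  wlog h : i ≤ j generalizing i j
  · rw [(cycleGraph _).adj_comm, (pathGraph _).adj_comm]
    exact this j i (le_of_not_ge h)
  have := j.isLt
  rcases h.eq_or_lt with rfl | hlt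
  · simp
  rw [cycleGraph_adj', pathGraph_adj, Fin.sub_val_of_le (Fin.succ_le_succ_iff.2 h),
    Fin.coe_sub_iff_lt.mpr (Fin.succ_lt_succ_iff.2 hlt)]
  simp only [Fin.val_succ]
  omega

namespace Walk

variable {a b : V}

lemma isPath_of_forall_length_le (p : G.Walk a b)
    (hmin : ∀ q : G.Walk a b, q.support ⊆ p.support → p.length ≤ q.length) : p.IsPath := by
  rw [← IsPath.getVert_injOn_iff]
  intro i (hi : i ≤ p.length) j (hj : j ≤ p.length) hij
  by_contra hne
  wlog hlt : i < j generalizing i j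
  · exact this hj hi hij.symm (Ne.symm hne) (by omega)
  let q : G.Walk a b := (p.take i).append ((p.drop j).copy hij.symm rfl)
  have hsub : q.support ⊆ p.support := by
    intro x hx
    rw [mem_support_append_iff, support_copy] at hx
    exact hx.elim (fun h => (p.isSubwalk_take i).support_subset h)
      (fun h => (p.isSubwalk_drop j).support_subset h)
  have := hmin q hsub
  simp only [q, length_append, length_copy, take_length, drop_length] at this
  omega

lemma not_adj_getVert_of_forall_length_le (p : G.Walk a b)
    (hmin : ∀ q : G.Walk a b, q.support ⊆ p.support → p.length ≤ q.length)
    {i j : ℕ} (hij : i + 1 < j) (hj : j ≤ p.length) : ¬ G.Adj (p.getVert i) (p.getVert j) := by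
  intro hadj
  let q : G.Walk a b := (p.take i).append (cons hadj (p.drop j))
  have hsub : q.support ⊆ p.support := by
    intro x hx
    rw [mem_support_append_iff, support_cons, List.mem_cons] at hx
    rcases hx with h | rfl | h
    · exact (p.isSubwalk_take i).support_subset h
    · exact p.getVert_mem_support i
    · exact (p.isSubwalk_drop j).support_subset h
  have := hmin q hsub
  simp only [q, length_append, length_cons, take_length, drop_length] at this
  omega

lemma adj_getVert_iff_pathGraph_adj {p : G.Walk a b}
    (hchord : ∀ i j, i + 1 < j → j ≤ p.length → ¬ G.Adj (p.getVert i) (p.getVert j))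
    (i j : Fin (p.length + 1)) :
    G.Adj (p.getVert i) (p.getVert j) ↔ (pathGraph (p.length + 1)).Adj i j := by
  have hi := i.isLt
  have hj := j.isLt
  rw [pathGraph_adj]
  constructor
  · intro h
    rcases lt_trichotomy i.val j.val with hlt | heq | hgt
    · by_contra hne
      exact hchord i j (by omega) (by omega) h
    · exact absurd (heq ▸ h) G.irrefl
    · by_contra hne
      exact hchord j i (by omega) (by omega) h.symm
  · rintro (h | h)
    · exact h ▸ p.adj_getVert_succ (by omega)
    · exact (h ▸ p.adj_getVert_succ (by omega)).symm

lemma nonempty_cycleGraph_embedding {p : G.Walk a b} (hp : p.IsPath) {v : V}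
    (hv : v ∉ p.support) (ha : G.Adj v a) (hb : G.Adj v b)
    (hinner : ∀ i, 0 < i → i < p.length → ¬ G.Adj v (p.getVert i))
    (hchord : ∀ i j, i + 1 < j → j ≤ p.length → ¬ G.Adj (p.getVert i) (p.getVert j)) :
    Nonempty (cycleGraph (p.length + 2) ↪g G) := by
  let f : Fin (p.length + 2) → V := Fin.cases v fun i => p.getVert i
  have hvadj (j : Fin (p.length + 1)) : G.Adj v (p.getVert j) ↔ j.val = 0 ∨ j.val = p.length := by
    refine ⟨fun h => ?_, ?_⟩
    · by_contra hne
      exact hinner j (by omega) (by omega) h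
    · rintro (h | h) <;> simpa [h]
  have hf : Function.Injective f := by
    intro x y hxy
    induction x using Fin.cases <;> induction y using Fin.cases
    · rfl
    · simp only [f, Fin.cases_zero, Fin.cases_succ] at hxy
      exact absurd (hxy ▸ p.getVert_mem_support _) hv
    · simp only [f, Fin.cases_zero, Fin.cases_succ] at hxy
      exact absurd (hxy ▸ p.getVert_mem_support _) hv
    · simp only [f, Fin.cases_succ] at hxy
      exact congrArg Fin.succ (Fin.ext (hp.getVert_injOn (Fin.is_le _) (Fin.is_le _) hxy))
  refine ⟨⟨⟨f, hf⟩, fun {x y} => ?_⟩⟩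
  simp only [Function.Embedding.coeFn_mk]
  induction x using Fin.cases <;> induction y using Fin.cases
  · simp
  · simp only [f, Fin.cases_zero, Fin.cases_succ]
    rw [hvadj, cycleGraph_adj_zero_succ]
  · simp only [f, Fin.cases_zero, Fin.cases_succ]
    rw [G.adj_comm, (cycleGraph _).adj_comm, hvadj, cycleGraph_adj_zero_succ]
  · simp only [f, Fin.cases_succ]
    rw [adj_getVert_iff_pathGraph_adj hchord, cycleGraph_adj_succ_succ]

end Walk

theorem reachable_induce_neighborSet_of_walk
    (hchordal : ∀ n : ℕ, 4 ≤ n → IsEmpty (cycleGraph n ↪g G)) {v a b : V}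
    (ha : G.Adj v a) (hb : G.Adj v b) (p : G.Walk a b) (hv : v ∉ p.support) :
    (G.induce (G.neighborSet v)).Reachable ⟨a, ha⟩ ⟨b, hb⟩ := by
  induction hn : p.length using Nat.strong_induction_on generalizing a b with
  | _ n ih =>
  subst hn
  by_cases hshorter : ∃ q : G.Walk a b, q.support ⊆ p.support ∧ q.length < p.length
  · obtain ⟨q, hsub, hlt⟩ := hshorter
    exact ih _ hlt ha hb q (fun h => hv (hsub h)) rfl
  push Not at hshorter
  by_cases hinner : ∃ i, 0 < i ∧ i < p.length ∧ G.Adj v (p.getVert i)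
  · obtain ⟨i, hi0, hi, hvi⟩ := hinner
    have htake := ih _ (by rw [Walk.take_length]; omega) ha hvi (p.take i)
      (fun h => hv ((p.isSubwalk_take i).support_subset h)) rfl
    have hdrop := ih _ (by rw [Walk.drop_length]; omega) hvi hb (p.drop i)
      (fun h => hv ((p.isSubwalk_drop i).support_subset h)) rfl
    exact htake.trans hdrop
  push Not at hinner
  rcases Nat.lt_or_ge p.length 2 with hlen | hlen
  · interval_cases h : p.length
    · cases p.eq_of_length_eq_zero h
      rfl
    · exact Adj.reachable (p.adj_of_length_eq_one h)
  · obtain ⟨e⟩ := p.nonempty_cycleGraph_embedding (p.isPath_of_forall_length_le hshorter) hv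
      ha hb hinner fun i j hij hj => p.not_adj_getVert_of_forall_length_le hshorter hij hj
    exact ((hchordal _ (by omega)).false e).elim

end SimpleGraph

theorem two_connected_chordal_locally_connected_general {V : Type*} (G : SimpleGraph V)
    (hG : G.Connected)
    (hdel : ∀ v : V, (G.induce ({v}ᶜ : Set V)).Connected)
    (hchordal : ∀ n : ℕ, 4 ≤ n → IsEmpty (cycleGraph n ↪g G)) :
    G.LocallyConnected := by
  intro v
  obtain ⟨⟨u, hu⟩⟩ := (hdel v).nonempty
  obtain ⟨p⟩ := hG.preconnected v u
  have hvs := p.adj_snd (Walk.not_nil_of_ne (Ne.symm hu))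
  refine (connected_iff _).2 ⟨fun ⟨a, ha⟩ ⟨b, hb⟩ => ?_, ⟨⟨_, hvs⟩⟩⟩
  obtain ⟨q⟩ := (hdel v).preconnected ⟨a, ha.ne'⟩ ⟨b, hb.ne'⟩
  refine reachable_induce_neighborSet_of_walk hchordal ha hb
    (q.map (Embedding.induce _).toHom) fun h => ?_
  obtain ⟨x, -, hx⟩ := List.mem_map.1 ((q.support_map _) ▸ h)
  exact x.prop hx

theorem two_connected_chordal_locally_connected {V : Type*} [Fintype V] (G : SimpleGraph V)
    (hG : G.Connected) (hcard : 3 ≤ Fintype.card V)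
    (hdel : ∀ v : V, (G.induce ({v}ᶜ : Set V)).Connected)
    (hchordal : ∀ n : ℕ, 4 ≤ n → IsEmpty (cycleGraph n ↪g G)) :
    G.LocallyConnected :=
  two_connected_chordal_locally_connected_general G hG hdel hchordal
end

section
/- For every integer k ≥ 3, let H_{2k} be the graph obtained from two disjoint complete graphs on k vertices joined by a perfect matching: its vertex set is {1,...,k} × {0,1}, with (i,s) adjacent to (j,t) iff (s = t and i ≠ j) or (s ≠ t and i = j). Then H_{2k} is connected, has diameter two, and has exactly C(k,2) + 1 distinct lines. In particular, for k ∈ {3,4}, H_{2k} has fewer lines than vertices. -/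
open SimpleGraph

/-- The graph `H_{2k}`: two disjoint complete graphs on `k` vertices joined by a perfect
matching. Vertex `(i, s)` is adjacent to `(j, t)` iff (`s = t` and `i ≠ j`) or
(`s ≠ t` and `i = j`). -/
def Hmatching (k : ℕ) : SimpleGraph (Fin k × Fin 2) :=
  SimpleGraph.fromRel (fun a b => (a.2 = b.2 ∧ a.1 ≠ b.1) ∨ (a.2 ≠ b.2 ∧ a.1 = b.1))

lemma Hadj {k : ℕ} {a b : Fin k × Fin 2} :
    (Hmatching k).Adj a b ↔ a ≠ b ∧ (a.1 = b.1 ∨ a.2 = b.2) := by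
  simp only [Hmatching, fromRel_adj, ne_eq, Prod.ext_iff, not_and]
  constructor
  · rintro ⟨h, h2⟩
    exact ⟨h, by tauto⟩
  · rintro ⟨h, h2⟩
    refine ⟨h, ?_⟩
    by_cases h1 : a.1 = b.1
    · exact Or.inl (Or.inr ⟨fun he => h h1 he, h1⟩)
    · tauto

lemma Hwalk {k : ℕ} (a b : Fin k × Fin 2) :
    ∃ w : (Hmatching k).Walk a b, w.length ≤ 2 := by
  by_cases hab : a = b
  · subst hab; exact ⟨.nil, by simp⟩
  by_cases hadj : (Hmatching k).Adj a b
  · exact ⟨hadj.toWalk, by simp⟩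
  · have h1 : a.1 ≠ b.1 := fun h => hadj (Hadj.mpr ⟨hab, Or.inl h⟩)
    have h2 : a.2 ≠ b.2 := fun h => hadj (Hadj.mpr ⟨hab, Or.inr h⟩)
    have e1 : (Hmatching k).Adj a (b.1, a.2) :=
      Hadj.mpr ⟨by simp [Prod.ext_iff]; intro h; exact absurd h h1, Or.inr rfl⟩
    have e2 : (Hmatching k).Adj (b.1, a.2) b :=
      Hadj.mpr ⟨by simp [Prod.ext_iff]; exact h2, Or.inl rfl⟩
    exact ⟨.cons e1 (.cons e2 .nil), by simp⟩

lemma Hdist {k : ℕ} (a b : Fin k × Fin 2) :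
    (Hmatching k).dist a b = if a = b then 0 else if a.1 = b.1 ∨ a.2 = b.2 then 1 else 2 := by
  by_cases hab : a = b
  · simp [hab]
  by_cases hadj : a.1 = b.1 ∨ a.2 = b.2
  · simp only [hab, if_false, hadj, if_true]
    exact dist_eq_one_iff_adj.mpr (Hadj.mpr ⟨hab, hadj⟩)
  · simp only [hab, if_false, hadj, if_false]
    obtain ⟨w, hw⟩ := Hwalk a b
    have hle : (Hmatching k).dist a b ≤ 2 := le_trans (dist_le w) hw
    have hne0 : (Hmatching k).dist a b ≠ 0 := by
      intro h
      rcases dist_eq_zero_iff_eq_or_not_reachable.mp h with h1 | h1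
      · exact hab h1
      · obtain ⟨w, _⟩ := Hwalk a b; exact h1 ⟨w⟩
    have hne1 : (Hmatching k).dist a b ≠ 1 := fun h =>
      hadj ((Hadj.mp (dist_eq_one_iff_adj.mp h)).2)
    omega

lemma Hline {k : ℕ} (a b : Fin k × Fin 2) (hab : a ≠ b) :
    (Hmatching k).line a b =
      if a.1 = b.1 then Set.univ else {x | x.1 = a.1 ∨ x.1 = b.1} := by
  obtain ⟨a1, a2⟩ := a
  obtain ⟨b1, b2⟩ := b
  by_cases h1 : a1 = b1 <;>
  · ext ⟨c1, c2⟩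
    simp only [SimpleGraph.line, Set.mem_union, Set.mem_insert_iff, Set.mem_singleton_iff,
      Set.mem_setOf_eq, Hdist, Prod.mk.injEq, h1, if_true, if_false, Set.mem_univ, iff_true]
    by_cases h2 : a1 = c1 <;> by_cases h3 : b1 = c1 <;>
      fin_cases a2 <;> fin_cases b2 <;> fin_cases c2 <;>
      simp_all [Prod.ext_iff, eq_comm]

lemma HlineSet {k : ℕ} (hk : 3 ≤ k) :
    (Hmatching k).lineSet =
      insert Set.univ
        ((fun s : Finset (Fin k) => {x : Fin k × Fin 2 | x.1 ∈ s}) ''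
          {s : Finset (Fin k) | s.card = 2}) := by
  have hk0 : 0 < k := by omega
  ext L
  constructor
  · rintro ⟨a, b, hab, rfl⟩
    rw [Hline a b hab]
    by_cases h1 : a.1 = b.1
    · simp [h1]
    · right
      refine ⟨{a.1, b.1}, ?_, ?_⟩
      · simp [Finset.card_pair h1]
      · simp [h1]
  · rintro (rfl | ⟨s, hs, rfl⟩)
    · refine ⟨(⟨0, hk0⟩, 0), (⟨0, hk0⟩, 1), ?_, ?_⟩
      · simp [Prod.ext_iff]
      · rw [Hline _ _ (by simp [Prod.ext_iff])]
        simp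
    · obtain ⟨i, j, hij, rfl⟩ := Finset.card_eq_two.mp hs
      refine ⟨(i, 0), (j, 0), ?_, ?_⟩
      · simp [Prod.ext_iff, hij]
      · rw [Hline _ _ (by simp [Prod.ext_iff, hij])]
        simp only [hij, if_false]
        ext x
        simp

theorem Hmatching_lines (k : ℕ) (hk : 3 ≤ k) :
    (Hmatching k).Connected ∧ (Hmatching k).diam = 2 ∧
    (Hmatching k).lineSet.ncard = k.choose 2 + 1 ∧
    ((k = 3 ∨ k = 4) →
      (Hmatching k).lineSet.ncard < Fintype.card (Fin k × Fin 2)) := by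
  have hk0 : 0 < k := by omega
  have hk1 : 1 < k := by omega
  have hconn : (Hmatching k).Connected := by
    rw [connected_iff]
    refine ⟨fun a b => ?_, ⟨(⟨0, hk0⟩, 0)⟩⟩
    obtain ⟨w, _⟩ := Hwalk a b
    exact ⟨w⟩
  have hncard : (Hmatching k).lineSet.ncard = k.choose 2 + 1 := by
    rw [HlineSet hk]
    have hinj : Set.InjOn (fun s : Finset (Fin k) => {x : Fin k × Fin 2 | x.1 ∈ s})
        {s : Finset (Fin k) | s.card = 2} := by
      intro s _ t _ h
      ext i
      have := Set.ext_iff.mp h (i, (0 : Fin 2))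
      simpa using this
    have hnotmem : Set.univ ∉
        ((fun s : Finset (Fin k) => {x : Fin k × Fin 2 | x.1 ∈ s}) ''
          {s : Finset (Fin k) | s.card = 2}) := by
      rintro ⟨s, hs, heq⟩
      have : s = Finset.univ := by
        rw [Finset.eq_univ_iff_forall]
        intro i
        have := Set.ext_iff.mp heq (i, (0 : Fin 2))
        simpa using this.mpr trivial
      have hs2 : s.card = 2 := hs
      rw [this, Finset.card_univ, Fintype.card_fin] at hs2
      omega
    rw [Set.ncard_insert_of_notMem hnotmem (Set.toFinite _),
      Set.ncard_image_of_injOn hinj]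
    have : {s : Finset (Fin k) | s.card = 2} =
        ↑(Finset.univ.powersetCard 2 : Finset (Finset (Fin k))) := by
      ext s
      simp [Finset.mem_powersetCard, eq_comm]
    rw [this, Set.ncard_coe_finset, Finset.card_powersetCard, Finset.card_univ,
      Fintype.card_fin]
  refine ⟨hconn, ?_, hncard, ?_⟩
  · -- diam = 2
    have hediam : (Hmatching k).ediam ≤ 2 := by
      apply ediam_le_of_edist_le
      intro u v
      obtain ⟨w, hw⟩ := Hwalk u v
      calc (Hmatching k).edist u v ≤ w.length := edist_le w
        _ ≤ 2 := by exact_mod_cast Nat.cast_le.mpr hw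
    have hd2 : (Hmatching k).dist (⟨0, hk0⟩, 0) (⟨1, hk1⟩, 1) = 2 := by
      rw [Hdist]
      simp [Prod.ext_iff, Fin.ext_iff]
    have htop : (Hmatching k).ediam ≠ ⊤ := by
      intro h; rw [h] at hediam; exact absurd hediam (by simp)
    have hle : (Hmatching k).diam ≤ 2 := by
      have := ENat.toNat_le_toNat hediam (by simp)
      simpa [SimpleGraph.diam] using this
    have hge := dist_le_diam (u := (⟨0, hk0⟩, 0)) (v := (⟨1, hk1⟩, 1)) htop
    rw [hd2] at hge
    omega
  · -- small cases
    rintro (rfl | rfl) <;> rw [hncard] <;> decide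
end

section
/- Let H'_8 be the graph on vertex set {1,2,3,4} × {0,1} in which (i,s) is adjacent to (j,t) iff (s = t and i ≠ j) or (s ≠ t and i = j and i ≠ 1) — i.e., the graph obtained from two disjoint copies of K_4 joined by a perfect matching by deleting one matching edge. Then H'_8 is 2-connected, has diameter three, has 8 vertices and exactly 7 distinct lines. -/
open SimpleGraph

/-- The graph `H'₈`: two disjoint copies of `K₄` joined by a perfect matching, with the
matching edge at the first index deleted. Vertex `(i, s)` is adjacent to `(j, t)` iff
(`s = t` and `i ≠ j`) or (`s ≠ t` and `i = j` and `i ≠ 0`). -/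
def H8' : SimpleGraph (Fin 4 × Fin 2) :=
  SimpleGraph.fromRel
    (fun a b => (a.2 = b.2 ∧ a.1 ≠ b.1) ∨ (a.2 ≠ b.2 ∧ a.1 = b.1 ∧ a.1 ≠ 0))


def dH (a b : Fin 4 × Fin 2) : ℕ :=
  if a = b then 0 else if a.2 = b.2 then 1 else
    if a.1 = b.1 then (if a.1 = 0 then 3 else 1) else 2

lemma walkex {V : Type*} {G : SimpleGraph V} {d : V → V → ℕ}
    (hzero : ∀ x y, d x y = 0 → x = y)
    (hsucc : ∀ x y, d x y ≠ 0 → ∃ z, G.Adj z y ∧ d x z + 1 = d x y) :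
    ∀ (n : ℕ) (x y : V), d x y = n → ∃ p : G.Walk x y, p.length = n := by
  intro n
  induction n with
  | zero => intro x y h; obtain rfl := hzero x y h; exact ⟨SimpleGraph.Walk.nil, rfl⟩
  | succ n ih =>
    intro x y h
    obtain ⟨z, hadj, hz⟩ := hsucc x y (by omega)
    obtain ⟨p, hp⟩ := ih x z (by omega)
    exact ⟨p.concat hadj, by simp [SimpleGraph.Walk.length_concat, hp]⟩

lemma walklow {V : Type*} {G : SimpleGraph V} {d : V → V → ℕ}
    (hstep : ∀ x y z, G.Adj y z → d x z ≤ d x y + 1) (a b : V) :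
    ∀ (y : V) (p : G.Walk y b), d a b ≤ d a y + p.length := by
  intro y p
  induction p with
  | nil => simp
  | @cons u v w h q ih =>
    have := hstep a u v h
    simp only [SimpleGraph.Walk.length_cons]
    omega

lemma edist_eq_of {V : Type*} {G : SimpleGraph V} {d : V → V → ℕ}
    (hzero : ∀ x y, d x y = 0 → x = y)
    (h0 : ∀ x, d x x = 0)
    (hsucc : ∀ x y, d x y ≠ 0 → ∃ z, G.Adj z y ∧ d x z + 1 = d x y)
    (hstep : ∀ x y z, G.Adj y z → d x z ≤ d x y + 1) :
    ∀ a b, G.edist a b = d a b := by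
  intro a b
  obtain ⟨p, hp⟩ := walkex hzero hsucc (d a b) a b rfl
  have hub : G.edist a b ≤ d a b := by
    calc G.edist a b ≤ p.length := SimpleGraph.edist_le p
    _ = d a b := by exact_mod_cast hp
  refine le_antisymm hub ?_
  obtain ⟨q, hq⟩ := exists_walk_of_edist_ne_top (G := G) (u := a) (v := b)
    (lt_of_le_of_lt hub (ENat.coe_lt_top _)).ne
  have := walklow hstep a b a q
  rw [h0 a] at this
  calc (d a b : ℕ∞) ≤ q.length := by exact_mod_cast (by omega : d a b ≤ q.length)
  _ = G.edist a b := hq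

instance : DecidableRel H8'.Adj := fun a b =>
  decidable_of_iff _ (SimpleGraph.fromRel_adj _ a b).symm

lemma H8'_edist : ∀ a b, H8'.edist a b = dH a b := by
  apply edist_eq_of
  · decide
  · decide
  · decide
  · decide

lemma H8'_dist : ∀ a b, H8'.dist a b = dH a b := by
  intro a b
  rw [show H8'.dist a b = (H8'.edist a b).toNat from rfl, H8'_edist]
  simp

lemma connected_of_chain {V : Type*} (G : SimpleGraph V) (u : V)
    (h : ∀ x, x = u ∨ G.Adj u x ∨ (∃ y, G.Adj u y ∧ G.Adj y x) ∨
      (∃ y z, G.Adj u y ∧ G.Adj y z ∧ G.Adj z x)) : G.Connected := by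
  rw [connected_iff_exists_forall_reachable]
  refine ⟨u, fun x => ?_⟩
  rcases h x with rfl | h | ⟨y, h1, h2⟩ | ⟨y, z, h1, h2, h3⟩
  · exact SimpleGraph.Reachable.refl _
  · exact h.reachable
  · exact h1.reachable.trans h2.reachable
  · exact h1.reachable.trans (h2.reachable.trans h3.reachable)

instance (v : Fin 4 × Fin 2) : DecidablePred (· ∈ ({v}ᶜ : Set (Fin 4 × Fin 2))) :=
  fun x => decidable_of_iff (¬ x = v) (by simp)

lemma H8'_two_conn : ∀ v : Fin 4 × Fin 2, (H8'.induce ({v}ᶜ : Set (Fin 4 × Fin 2))).Connected := by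
  intro v
  fin_cases v <;>
    first
      | exact connected_of_chain _ ⟨((3 : Fin 4), (1 : Fin 2)), by decide⟩ (by decide)
      | exact connected_of_chain _ ⟨((2 : Fin 4), (1 : Fin 2)), by decide⟩ (by decide)

lemma H8'_conn : H8'.Connected :=
  connected_of_chain _ ((3 : Fin 4), (1 : Fin 2)) (by decide)

lemma H8'_diam : H8'.diam = 3 := by
  have h1 : H8'.ediam = 3 := by
    apply le_antisymm
    · apply SimpleGraph.ediam_le_of_edist_le
      intro u v
      rw [H8'_edist]
      have h : ∀ u v, dH u v ≤ 3 := by decide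
      exact_mod_cast h u v
    · calc (3 : ℕ∞) = H8'.edist (0, 0) (0, 1) := by
            rw [H8'_edist]; decide
        _ ≤ H8'.ediam := SimpleGraph.edist_le_ediam
  rw [SimpleGraph.diam, h1]
  rfl

def lineF (a b : Fin 4 × Fin 2) : Finset (Fin 4 × Fin 2) :=
  {a, b} ∪ Finset.univ.filter (fun c => dH a b = dH a c + dH c b ∨
    dH a c = dH a b + dH b c ∨ dH b c = dH b a + dH a c)

lemma line_eq (a b : Fin 4 × Fin 2) : H8'.line a b = ↑(lineF a b) := by
  ext c
  simp [SimpleGraph.line, lineF, H8'_dist]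
  tauto

def lineFs : Finset (Finset (Fin 4 × Fin 2)) :=
  ((Finset.univ : Finset ((Fin 4 × Fin 2) × (Fin 4 × Fin 2))).filter
    fun p => p.1 ≠ p.2).image fun p => lineF p.1 p.2

lemma lineSet_eq : H8'.lineSet =
    ((↑) : Finset (Fin 4 × Fin 2) → Set (Fin 4 × Fin 2)) ''
      (↑lineFs : Set (Finset (Fin 4 × Fin 2))) := by
  ext s
  simp only [SimpleGraph.lineSet, Set.mem_setOf_eq, Set.mem_image, Finset.mem_coe,
    lineFs, Finset.mem_image, Finset.mem_filter, Finset.mem_univ, true_and]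
  constructor
  · rintro ⟨a, b, hab, rfl⟩
    exact ⟨lineF a b, ⟨(a, b), hab, rfl⟩, (line_eq a b).symm⟩
  · rintro ⟨t, ⟨⟨a, b⟩, hab, rfl⟩, rfl⟩
    exact ⟨a, b, hab, (line_eq a b).symm⟩

lemma H8'_lines : H8'.lineSet.ncard = 7 := by
  rw [lineSet_eq, Set.ncard_image_of_injective _ Finset.coe_injective,
    Set.ncard_coe_finset]
  decide

theorem H8'_two_connected_diam_three_seven_lines :
    (H8'.Connected ∧ 3 ≤ Fintype.card (Fin 4 × Fin 2) ∧
      ∀ v : Fin 4 × Fin 2, (H8'.induce ({v}ᶜ : Set (Fin 4 × Fin 2))).Connected) ∧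
    H8'.diam = 3 ∧ Fintype.card (Fin 4 × Fin 2) = 8 ∧ H8'.lineSet.ncard = 7 := by
  refine ⟨⟨H8'_conn, by decide, H8'_two_conn⟩, H8'_diam, rfl, H8'_lines⟩
end
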